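/- Let α_I ≥ 0 and let v_I : [0,∞) → ℝ be differentiable with v_I(0) = α_I and dv_I/dt = β h_I(θ_t) h_S(θ_t)/h_X(θ_t) − ρ v_I(t) for all t ≥ 0. Then for every t ≥ 0, v_I(t) = α_I e^{−ρt} − ∫_0^t (d/ds v_S(θ_s)) e^{−ρ(t−s)} ds, where d/ds v_S(θ_s) denotes the derivative of the composite function s ↦ v_S(θ_s). -/

import Mathlib

/-! On `(0, 1]` we have `v_S' = h_S / θ`, as a left derivative at `θ = 1` (the radius of
convergence may be `1`). Since `θ_s ≤ 1`, a one-sided derivative suffices for the chain rule, which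
gives `d/ds v_S(θ_s) = -β h_I h_S / h_X (θ_s)` for `s > 0`. Hence `v_I' = g - ρ v_I` with the
continuous forcing `g = -d/ds v_S(θ_s)`, and the formula is the variation-of-constants solution. -/

open scoped BigOperators
open Real

noncomputable def vS (αS : ℝ) (p : ℕ → ℝ) (θ : ℝ) : ℝ := αS * ∑' k : ℕ, p k * θ ^ k

noncomputable def hS (αS : ℝ) (p : ℕ → ℝ) (θ : ℝ) : ℝ := αS * ∑' k : ℕ, (k : ℝ) * p k * θ ^ k

noncomputable def hX (μ : ℝ) (θ : ℝ) : ℝ := μ * θ ^ 2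

noncomputable def hR (μ μR β ρ : ℝ) (θ : ℝ) : ℝ := μR * θ + μ * ρ / β * (θ * (1 - θ))

noncomputable def hI (αS μ μR β ρ : ℝ) (p : ℕ → ℝ) (θ : ℝ) : ℝ :=
  hX μ θ - hS αS p θ - hR μ μR β ρ θ

noncomputable def F (β ρ t : ℝ) : ℝ := ρ / (β + ρ) + β / (β + ρ) * Real.exp (-(β + ρ) * t)

open Set Filter Topology MeasureTheory

section PowerSeries

variable {q : ℕ → ℝ}

theorem continuousOn_tsum_mul_pow (hq : Summable q) (e : ℕ → ℕ) :
    ContinuousOn (fun x : ℝ => ∑' k, q k * x ^ e k) (Icc (-1) 1) := by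
  refine continuousOn_tsum (fun k => (continuous_const.mul (continuous_pow _)).continuousOn)
    hq.abs fun k x hx => ?_
  rw [norm_mul, norm_pow, Real.norm_eq_abs, Real.norm_eq_abs]
  exact mul_le_of_le_one_right (abs_nonneg _) (pow_le_one₀ (abs_nonneg x) (abs_le.mpr hx))

theorem hasDerivAt_tsum_mul_pow (hq' : Summable fun k : ℕ => (k : ℝ) * q k) {x : ℝ}
    (hx : x ∈ Ioo (-1) 1) :
    HasDerivAt (fun y : ℝ => ∑' k, q k * y ^ k) (∑' k : ℕ, (k : ℝ) * q k * x ^ (k - 1)) x := by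
  have hsum0 : Summable fun k : ℕ => q k * (0 : ℝ) ^ k :=
    summable_of_ne_finset_zero (s := {0}) fun k hk => by simp_all
  have h := hasDerivAt_tsum_of_isPreconnected (g := fun k (y : ℝ) => q k * y ^ k)
    (g' := fun k y => q k * ((k : ℝ) * y ^ (k - 1))) hq'.abs isOpen_Ioo
    (convex_Ioo _ _).isPreconnected (fun k y _ => (hasDerivAt_pow k y).const_mul (q k))
    (fun k y hy => ?_) (by norm_num : (0 : ℝ) ∈ Ioo (-1) 1) hsum0 hx
  · simpa only [mul_left_comm (q _), mul_assoc] using h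
  · rw [norm_mul, norm_mul, norm_pow, Real.norm_eq_abs, Real.norm_eq_abs, Real.norm_eq_abs,
      abs_mul, mul_left_comm, ← mul_assoc]
    exact mul_le_of_le_one_right (by positivity)
      (pow_le_one₀ (abs_nonneg y) (abs_le.mpr ⟨hy.1.le, hy.2.le⟩))

theorem hasDerivWithinAt_Iic_tsum_mul_pow (hq : Summable q)
    (hq' : Summable fun k : ℕ => (k : ℝ) * q k) {x : ℝ} (hx : x ∈ Ioc (-1) 1) :
    HasDerivWithinAt (fun y : ℝ => ∑' k, q k * y ^ k)
      (∑' k : ℕ, (k : ℝ) * q k * x ^ (k - 1)) (Iic 1) x := by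
  rcases hx.2.lt_or_eq with hx1 | rfl
  · exact (hasDerivAt_tsum_mul_pow hq' ⟨hx.1, hx1⟩).hasDerivWithinAt
  -- at the boundary point the one-sided derivative is the limit of the interior derivatives
  have hsub : Ioo (-1 : ℝ) 1 ⊆ Icc (-1) 1 := Ioo_subset_Icc_self
  have hmem : (1 : ℝ) ∈ Icc (-1) 1 := by norm_num
  refine hasDerivWithinAt_Iic_of_tendsto_deriv (s := Ioo (-1) 1)
    (fun y hy => (hasDerivAt_tsum_mul_pow hq' hy).differentiableAt.differentiableWithinAt)
    (((continuousOn_tsum_mul_pow hq fun k => k) 1 hmem).mono hsub)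
    (Ioo_mem_nhdsLT (by norm_num)) ?_
  rw [← nhdsWithin_Ioo_eq_nhdsLT (by norm_num : (-1 : ℝ) < 1)]
  refine (((continuousOn_tsum_mul_pow hq' fun k => k - 1) 1 hmem).mono hsub).tendsto.congr'
    (eventually_nhdsWithin_of_forall fun y hy => ?_)
  exact (hasDerivAt_tsum_mul_pow hq' hy).deriv.symm

theorem tsum_natCast_mul_mul_pow (x : ℝ) :
    ∑' k : ℕ, (k : ℝ) * q k * x ^ k = x * ∑' k : ℕ, (k : ℝ) * q k * x ^ (k - 1) := by
  rw [← tsum_mul_left]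
  refine tsum_congr fun k => ?_
  rcases k with _ | k
  · simp
  · rw [Nat.add_sub_cancel, pow_succ]
    ring

end PowerSeries

theorem eq_exp_mul_add_integral_of_hasDerivAt {v g : ℝ → ℝ} {ρ a b : ℝ}
    (hv : ∀ s ∈ uIcc a b, HasDerivAt v (g s - ρ * v s) s) (hg : IntervalIntegrable g volume a b) :
    v b = v a * exp (-ρ * (b - a)) + ∫ s in a..b, g s * exp (-ρ * (b - s)) := by
  have hw : ∀ s ∈ uIcc a b,
      HasDerivAt (fun u => v u * exp (ρ * u)) (g s * exp (ρ * s)) s := fun s hs => by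
    refine ((hv s hs).mul ((hasDerivAt_id' s).const_mul ρ).exp).congr_deriv ?_
    ring
  have hFTC := intervalIntegral.integral_eq_sub_of_hasDerivAt hw
    (hg.mul_continuousOn (continuous_const_mul ρ).rexp.continuousOn)
  have hintegrand : (fun s => g s * exp (-ρ * (b - s))) =
      fun s => exp (-ρ * b) * (g s * exp (ρ * s)) := by
    ext s
    rw [show -ρ * (b - s) = -ρ * b + ρ * s by ring, exp_add]
    ring
  rw [hintegrand, intervalIntegral.integral_const_mul, hFTC,
    show -ρ * (b - a) = -ρ * b + ρ * a by ring, exp_add]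
  have hexp : exp (-ρ * b) * exp (ρ * b) = 1 := by rw [← exp_add]; simp
  linear_combination (-v b) * hexp

section Epidemic

variable {αS μ μR β ρ : ℝ} {p : ℕ → ℝ}

theorem hasDerivWithinAt_vS (hp : Summable p) (hp' : Summable fun k : ℕ => (k : ℝ) * p k)
    {x : ℝ} (hx : x ∈ Ioc 0 1) : HasDerivWithinAt (vS αS p) (hS αS p x / x) (Iic 1) x := by
  have h := (hasDerivWithinAt_Iic_tsum_mul_pow hp hp' ⟨by linarith [hx.1], hx.2⟩).const_mul αS
  rwa [hS, tsum_natCast_mul_mul_pow, mul_div_assoc, mul_div_cancel_left₀ _ hx.1.ne']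

theorem continuousOn_hS (hp' : Summable fun k : ℕ => (k : ℝ) * p k) :
    ContinuousOn (hS αS p) (Icc (-1) 1) :=
  continuousOn_const.mul (continuousOn_tsum_mul_pow hp' fun k => k)

theorem continuousOn_hI (hp' : Summable fun k : ℕ => (k : ℝ) * p k) :
    ContinuousOn (hI αS μ μR β ρ p) (Icc (-1) 1) := by
  have hcS := continuousOn_hS (αS := αS) hp'
  unfold hI hX hR
  fun_prop

end Epidemic

theorem stmt13_general
    (β ρ μ μR αS : ℝ) (p : ℕ → ℝ) (θ : ℝ → ℝ)
    (hμ : 0 < μ)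
    (hpsummable : Summable p)
    (hmeanSummable : Summable (fun k : ℕ => (k : ℝ) * p k))
    (hθmem : ∀ t, 0 ≤ t → θ t ∈ Set.Ioc (0 : ℝ) 1)
    (hθderiv : ∀ t, 0 ≤ t →
      HasDerivAt θ (-β * θ t * hI αS μ μR β ρ p (θ t) / hX μ (θ t)) t)
    (αI : ℝ) (vI : ℝ → ℝ)
    (hvI0 : vI 0 = αI)
    (hvIderiv : ∀ t, 0 ≤ t →
      HasDerivAt vI
        (β * hI αS μ μR β ρ p (θ t) * hS αS p (θ t) / hX μ (θ t) - ρ * vI t) t)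
    (t : ℝ) (ht : 0 ≤ t) :
    vI t = αI * Real.exp (-ρ * t) -
      ∫ s in (0 : ℝ)..t,
        deriv (fun u => vS αS p (θ u)) s * Real.exp (-ρ * (t - s)) := by
  set G : ℝ → ℝ := fun x => β * hI αS μ μR β ρ p x * hS αS p x / hX μ x with hG
  have hIcc : uIcc 0 t = Icc 0 t := uIcc_of_le ht
  have hGθ : ContinuousOn (fun s => G (θ s)) (Icc 0 t) := by
    have hsub : Ioc (0 : ℝ) 1 ⊆ Icc (-1) 1 := fun x hx => ⟨by linarith [hx.1], hx.2⟩
    have hGcont : ContinuousOn G (Ioc 0 1) :=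
      ((continuousOn_const.mul ((continuousOn_hI hmeanSummable).mono hsub)).mul
        ((continuousOn_hS hmeanSummable).mono hsub)).div (by unfold hX; fun_prop)
        fun x hx => mul_ne_zero hμ.ne' (pow_ne_zero 2 hx.1.ne')
    exact hGcont.comp (fun s hs => (hθderiv s hs.1).continuousAt.continuousWithinAt)
      fun s hs => hθmem s hs.1
  have hvI := eq_exp_mul_add_integral_of_hasDerivAt (a := 0) (b := t)
    (fun s hs => hvIderiv s (hIcc ▸ hs).1) (ContinuousOn.intervalIntegrable (hIcc ▸ hGθ))
  have hderiv : ∀ s ∈ Ioc 0 t, deriv (fun u => vS αS p (θ u)) s = -G (θ s) := by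
    intro s hs
    have hθs := hθmem s hs.1.le
    have hle : ∀ᶠ u in 𝓝 s, θ u ∈ Iic 1 := by
      filter_upwards [Ioi_mem_nhds hs.1] with u hu using (hθmem u hu.le).2
    have hd : HasDerivAt (fun u => vS αS p (θ u)) _ s :=
      (hasDerivWithinAt_vS hpsummable hmeanSummable hθs).comp_hasDerivAt s (hθderiv s hs.1.le) hle
    rw [hd.deriv, hG]
    simp only [hX]
    field_simp [hθs.1.ne']
  rw [hvI, hvI0, sub_zero, sub_eq_add_neg, ← intervalIntegral.integral_neg]
  congr 1
  refine intervalIntegral.integral_congr_ae (Eventually.of_forall fun s hs => ?_)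
  rw [uIoc_of_le ht] at hs
  rw [hderiv s hs]
  ring

theorem stmt13
    (β ρ μ μS μI μR αS : ℝ) (p : ℕ → ℝ) (θ : ℝ → ℝ)
    (hβ : 0 < β) (hρ : 0 ≤ ρ) (hμ : 0 < μ)
    (hμS : 0 ≤ μS) (hμI : 0 ≤ μI) (hμR : 0 ≤ μR)
    (hμsum : μS + μI + μR = μ)
    (hαS : αS ∈ Set.Ioc (0 : ℝ) 1)
    (hp : ∀ k, 0 ≤ p k)
    (hpsummable : Summable p)
    (hpsum : ∑' k : ℕ, p k = 1)
    (hmeanSummable : Summable (fun k : ℕ => (k : ℝ) * p k))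
    (hmeanPos : 0 < ∑' k : ℕ, (k : ℝ) * p k)
    (hμSdef : μS = αS * ∑' k : ℕ, (k : ℝ) * p k)
    (hθ0 : θ 0 = 1)
    (hθmem : ∀ t, 0 ≤ t → θ t ∈ Set.Ioc (0 : ℝ) 1)
    (hθderiv : ∀ t, 0 ≤ t →
      HasDerivAt θ (-β * θ t * hI αS μ μR β ρ p (θ t) / hX μ (θ t)) t)
    (αI : ℝ) (hαI : 0 ≤ αI) (vI : ℝ → ℝ)
    (hvI0 : vI 0 = αI)
    (hvIderiv : ∀ t, 0 ≤ t →
      HasDerivAt vI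
        (β * hI αS μ μR β ρ p (θ t) * hS αS p (θ t) / hX μ (θ t) - ρ * vI t) t)
    (t : ℝ) (ht : 0 ≤ t) :
    vI t = αI * Real.exp (-ρ * t) -
      ∫ s in (0 : ℝ)..t,
        deriv (fun u => vS αS p (θ u)) s * Real.exp (-ρ * (t - s)) :=
  stmt13_general β ρ μ μR αS p θ hμ hpsummable hmeanSummable hθmem hθderiv αI vI hvI0 hvIderiv t ht
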